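/- arXiv:2010.05526 — 3 statements merged into one kernel-verified Lean document; each statement's English description precedes it below -/
import Mathlib

section
/- Fix an integer d ≥ 2 and a probability measure G on [0,∞) with bounded support. The map I : ℝ^d → [0,∞] is lower semi-continuous: for every v ∈ ℝ^d and every sequence (v_p)_{p≥1} in ℝ^d converging to v, one has liminf_{p→∞} I(v_p) ≥ I(v). -/
open MeasureTheory Filter Set
open scoped ENNReal Topology

namespace FPP

/-- `ℝ^d`, with Lebesgue measure `volume`. -/
abbrev Rd (d : ℕ) := Fin d → ℝ

/-- The Euclidean (ℓ²) norm on `Rd d`. -/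
noncomputable def nrm2 {d : ℕ} (v : Rd d) : ℝ := Real.sqrt (∑ i, v i ^ 2)

/-- An edge of the rescaled lattice `𝔼_n^d`, encoded by the integer coordinates of its left
endpoint together with its direction: the edge `(z, i)` of `𝔼_n^d` joins `z/n` to `z/n + eᵢ/n`. -/
abbrev Edge (d : ℕ) := (Fin d → ℤ) × Fin d

/-- The point `z / n` of the rescaled lattice `ℤ_n^d`. -/
noncomputable def pt {d : ℕ} (n : ℕ) (z : Fin d → ℤ) : Rd d := fun i => (z i : ℝ) / n

/-- `z + eᵢ` -/
def shift {d : ℕ} (z : Fin d → ℤ) (i : Fin d) : Fin d → ℤ := fun j => z j + if j = i then 1 else 0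

/-- `z - eᵢ` -/
def unshift {d : ℕ} (z : Fin d → ℤ) (i : Fin d) : Fin d → ℤ := fun j => z j - if j = i then 1 else 0

/-- the `i`-th vector of the canonical basis of `ℝ^d` -/
noncomputable def bvec {d : ℕ} (i : Fin d) : Rd d := fun j => if j = i then 1 else 0

/-- the center `c(e)` of an edge of `𝔼_n^d` -/
noncomputable def center {d : ℕ} (n : ℕ) (e : Edge d) : Rd d :=
  fun j => ((e.1 j : ℝ) + if j = e.2 then 1 / 2 else 0) / n

/-- A stream `f_n : 𝔼_n^d → ℝ^d`, encoded by its signed intensity `F e` along each edge `e`: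
the vector value of the stream on `e` is `F e • bvec e.2`, automatically collinear with `e`. -/
abbrev Streamm (d : ℕ) := Edge d → ℝ

/-- the vector value `f_n(e)` of a stream on an edge -/
noncomputable def streamVec {d : ℕ} (F : Streamm d) (e : Edge d) : Rd d := F e • bvec e.2

/-- The vector measure `μ_n(f_n) = n^{-d} ∑_e f_n(e) δ_{c(e)}` of a stream, as an
`ℝ^d`-valued set function. -/
noncomputable def streamMeas {d : ℕ} (n : ℕ) (F : Streamm d) : Set (Rd d) → Rd d :=
  fun A => ∑' e : Edge d, Set.indicator A (fun _ => ((n : ℝ) ^ d)⁻¹ • streamVec F e) (center n e)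

/-- The node law at the lattice point `z/n` (scale invariant, hence stated on `ℤ^d`). -/
def nodeLaw {d : ℕ} (F : Streamm d) (z : Fin d → ℤ) : Prop :=
  ∑ i : Fin d, (F (z, i) - F (unshift z i, i)) = 0

/-- Membership in the set `S_n(C)` of admissible streams through `C` (without prescribed sinks
and sources), for the capacities `c` : the capacity constraint `‖f_n(e)‖₂ ≤ t(e)` holds for
every edge whose left endpoint belongs to `C`, and the node law holds at every vertex `x` of
`ℤ_n^d ∩ C` such that `x - eᵢ/n ∈ C` for every `i`. -/
def memSnSet {d : ℕ} (n : ℕ) (c : Edge d → ℝ) (C : Set (Rd d)) (F : Streamm d) : Prop :=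
  (∀ e : Edge d, pt n e.1 ∈ C → |F e| ≤ c e) ∧
  (∀ z : Fin d → ℤ, pt n z ∈ C → (∀ i : Fin d, pt n (unshift z i) ∈ C) → nodeLaw F z)

/-- The translated dyadic cube `Q + x`, where `Q ∈ Δ_λ^k` is indexed by `w ∈ ℤ^d`,
`Q = 2^{-k} λ ([-1/2,1/2)^d + w)`. -/
def dyadicCube {d : ℕ} (k : ℕ) (lam : ℝ) (w : Fin d → ℤ) (x : Rd d) : Set (Rd d) :=
  {y | ∀ i, lam * (2 : ℝ)⁻¹ ^ k * ((w i : ℝ) - 1 / 2) + x i ≤ y i ∧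
            y i < lam * (2 : ℝ)⁻¹ ^ k * ((w i : ℝ) + 1 / 2) + x i}

/-- The distance `𝔡` between two `ℝ^d`-valued set functions, with values in `[0,∞]`. -/
noncomputable def ddist {d : ℕ} (ν μ : Set (Rd d) → Rd d) : ℝ≥0∞ :=
  ⨆ (x : Rd d) (_ : ∀ i, -1 ≤ x i ∧ x i < 1) (lam : ℝ) (_ : 1 ≤ lam ∧ lam ≤ 2),
    ∑' k : ℕ, (2 : ℝ≥0∞)⁻¹ ^ k *
      ∑' w : Fin d → ℤ,
        ENNReal.ofReal (nrm2 (μ (dyadicCube k lam w x) - ν (dyadicCube k lam w x)))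

/-- the restriction `ν 𝟙_A` of an `ℝ^d`-valued set function to `A` -/
def restr {d : ℕ} (ν : Set (Rd d) → Rd d) (A : Set (Rd d)) : Set (Rd d) → Rd d :=
  fun S => ν (S ∩ A)

/-- the half-open unit cube `𝔠 = [-1/2, 1/2)^d` -/
def unitCube (d : ℕ) : Set (Rd d) := {y | ∀ i, -(1 / 2 : ℝ) ≤ y i ∧ y i < 1 / 2}

/-- The `ℝ^d`-valued measure `σ ℒ^d` with density `σ` w.r.t. Lebesgue measure,
as a set function. -/
noncomputable def densMeas {d : ℕ} (σ : Rd d → Rd d) : Set (Rd d) → Rd d :=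
  fun A => ∫ y in A, σ y

/-- the sequence `n ↦ n^{-d} log P(∃ f_n ∈ S_n(𝔠) : 𝔡(μ_n(f_n)𝟙_𝔠, w 𝟙_𝔠 ℒ^d) ≤ ε)`,
with values in `[-∞, ∞]` -/
noncomputable def cubeSeq (d : ℕ) {Ω' : Type*} [MeasurableSpace Ω'] (P : Measure Ω')
    (t : Edge d → Ω' → ℝ) (w : Rd d) (ε : ℝ) (n : ℕ) : EReal :=
  ((((n : ℝ) ^ d)⁻¹ : ℝ) : EReal) *
    ENNReal.log (P {ω | ∃ F : Streamm d, memSnSet n (fun e => t e ω) (unitCube d) F ∧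
      ddist (restr (streamMeas n F) (unitCube d))
        (densMeas (Set.indicator (unitCube d) fun _ => w)) ≤ ENNReal.ofReal ε})

/-- The elementary rate function `I(w) ∈ [0,∞]`: the monotone limit, as `ε → 0`, of
`- limsup_n n^{-d} log P(∃ f_n ∈ S_n(𝔠) : 𝔡(μ_n(f_n)𝟙_𝔠, w 𝟙_𝔠 ℒ^d) ≤ ε)`. -/
noncomputable def Ielem (d : ℕ) {Ω' : Type*} [MeasurableSpace Ω'] (P : Measure Ω')
    (t : Edge d → Ω' → ℝ) (w : Rd d) : EReal :=
  ⨆ (ε : ℝ) (_ : 0 < ε), -Filter.limsup (cubeSeq d P t w ε) Filter.atTop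

/-!
The events defining `I` are monotone in the target density: a stream within `𝔡`-distance `ε'`
of `w 𝟙_𝔠 ℒ^d` is within `ε' + 2‖w - v‖₂` of `v 𝟙_𝔠 ℒ^d`, since `𝔡` satisfies the triangle
inequality and the measures `(w - v) 𝟙_𝔠 ℒ^d` of disjoint dyadic cubes of one scale add up to at
most `‖w - v‖₂`, while the scales carry the weights `2^{-k}`, summing to `2`. Hence the
`ε`-approximation rate at `v` is dominated by the `ε/2`-approximation rate at any `w` with
`4‖w - v‖₂ ≤ ε`, which is the case for `w = v_p` with `p` large.
-/

section Lemmas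

variable {d : ℕ}

lemma nrm2_eq_norm (v : Rd d) : nrm2 v = ‖(WithLp.toLp 2 v : EuclideanSpace ℝ (Fin d))‖ := by
  simp only [nrm2, EuclideanSpace.norm_eq, Real.norm_eq_abs, sq_abs]

lemma continuous_nrm2 : Continuous (nrm2 : Rd d → ℝ) := by
  simp only [funext nrm2_eq_norm]
  fun_prop

lemma nrm2_zero : nrm2 (0 : Rd d) = 0 := by
  simp [nrm2]

lemma nrm2_nonneg (v : Rd d) : 0 ≤ nrm2 v :=
  Real.sqrt_nonneg _

lemma nrm2_sub_le (a b c : Rd d) : nrm2 (a - b) ≤ nrm2 (a - c) + nrm2 (c - b) := by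
  simp only [nrm2_eq_norm, WithLp.toLp_sub]
  exact norm_sub_le_norm_sub_add_norm_sub _ _ _

lemma nrm2_smul (c : ℝ) (v : Rd d) : nrm2 (c • v) = |c| * nrm2 v := by
  rw [nrm2_eq_norm, nrm2_eq_norm, WithLp.toLp_smul, norm_smul, Real.norm_eq_abs]

lemma dyadicCube_eq_pi (k : ℕ) (lam : ℝ) (w : Fin d → ℤ) (x : Rd d) :
    dyadicCube k lam w x = Set.univ.pi fun i =>
      Set.Ico (lam * (2 : ℝ)⁻¹ ^ k * ((w i : ℝ) - 1 / 2) + x i)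
        (lam * (2 : ℝ)⁻¹ ^ k * ((w i : ℝ) + 1 / 2) + x i) := by
  ext y
  simp [dyadicCube, Set.mem_pi]

lemma measurableSet_dyadicCube (k : ℕ) (lam : ℝ) (w : Fin d → ℤ) (x : Rd d) :
    MeasurableSet (dyadicCube k lam w x) := by
  rw [dyadicCube_eq_pi]
  exact MeasurableSet.univ_pi fun _ => measurableSet_Ico

lemma eq_floor_of_mem_dyadicCube {k : ℕ} {lam : ℝ} (hlam : 0 < lam) {w : Fin d → ℤ}
    {x y : Rd d} (hy : y ∈ dyadicCube k lam w x) (i : Fin d) :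
    w i = ⌊(y i - x i) / (lam * (2 : ℝ)⁻¹ ^ k) + 1 / 2⌋ := by
  have hs : 0 < lam * (2 : ℝ)⁻¹ ^ k := by positivity
  obtain ⟨hlow, hupp⟩ := hy i
  symm
  rw [Int.floor_eq_iff]
  constructor
  · have : (w i : ℝ) - 1 / 2 ≤ (y i - x i) / (lam * (2 : ℝ)⁻¹ ^ k) := by
      rw [le_div_iff₀ hs]
      linarith
    linarith
  · have : (y i - x i) / (lam * (2 : ℝ)⁻¹ ^ k) < (w i : ℝ) + 1 / 2 := by
      rw [div_lt_iff₀ hs]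
      linarith
    linarith

lemma pairwise_disjoint_dyadicCube {k : ℕ} {lam : ℝ} (hlam : 0 < lam) (x : Rd d) :
    Pairwise (Function.onFun Disjoint fun w : Fin d → ℤ => dyadicCube k lam w x) := by
  intro w w' hne
  refine Set.disjoint_left.mpr fun y hy hy' => hne (funext fun i => ?_)
  rw [eq_floor_of_mem_dyadicCube hlam hy, eq_floor_of_mem_dyadicCube hlam hy']

lemma tsum_volume_dyadicCube_inter_le {k : ℕ} {lam : ℝ} (hlam : 0 < lam) (x : Rd d)
    {A : Set (Rd d)} (hA : MeasurableSet A) :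
    ∑' w : Fin d → ℤ, volume (dyadicCube k lam w x ∩ A) ≤ volume A := by
  rw [← measure_iUnion (fun w w' h =>
      (pairwise_disjoint_dyadicCube hlam x h).mono Set.inter_subset_left Set.inter_subset_left)
    fun w => (measurableSet_dyadicCube k lam w x).inter hA]
  exact measure_mono (Set.iUnion_subset fun _ => Set.inter_subset_right)

lemma unitCube_eq_pi : unitCube d = Set.univ.pi fun _ => Set.Ico (-(1 / 2) : ℝ) (1 / 2) := by
  ext y
  simp [unitCube, Set.mem_pi]

lemma measurableSet_unitCube : MeasurableSet (unitCube d) := by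
  rw [unitCube_eq_pi]
  exact MeasurableSet.univ_pi fun _ => measurableSet_Ico

lemma volume_unitCube : volume (unitCube d) = 1 := by
  rw [unitCube_eq_pi, volume_pi_pi]
  norm_num

lemma densMeas_indicator_const (v : Rd d) {A : Set (Rd d)} (hA : MeasurableSet A)
    (Q : Set (Rd d)) :
    densMeas (A.indicator fun _ => v) Q = volume.real (Q ∩ A) • v := by
  rw [densMeas, setIntegral_indicator hA, setIntegral_const]

lemma le_ddist (ν μ : Set (Rd d) → Rd d) {x : Rd d} (hx : ∀ i, -1 ≤ x i ∧ x i < 1) {lam : ℝ}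
    (hlam : 1 ≤ lam ∧ lam ≤ 2) :
    ∑' k : ℕ, (2 : ℝ≥0∞)⁻¹ ^ k * ∑' w : Fin d → ℤ,
      ENNReal.ofReal (nrm2 (μ (dyadicCube k lam w x) - ν (dyadicCube k lam w x)))
        ≤ ddist ν μ :=
  le_iSup₂_of_le x hx (le_iSup₂_of_le lam hlam le_rfl)

lemma ddist_triangle (ν ρ μ : Set (Rd d) → Rd d) : ddist ν μ ≤ ddist ν ρ + ddist ρ μ := by
  refine iSup₂_le fun x hx => iSup₂_le fun lam hlam => ?_
  calc ∑' k : ℕ, (2 : ℝ≥0∞)⁻¹ ^ k * ∑' w : Fin d → ℤ,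
        ENNReal.ofReal (nrm2 (μ (dyadicCube k lam w x) - ν (dyadicCube k lam w x)))
      ≤ ∑' k : ℕ, ((2 : ℝ≥0∞)⁻¹ ^ k * ∑' w : Fin d → ℤ,
          ENNReal.ofReal (nrm2 (ρ (dyadicCube k lam w x) - ν (dyadicCube k lam w x)))
        + (2 : ℝ≥0∞)⁻¹ ^ k * ∑' w : Fin d → ℤ,
          ENNReal.ofReal (nrm2 (μ (dyadicCube k lam w x) - ρ (dyadicCube k lam w x)))) := by
        gcongr with k
        rw [← mul_add, ← ENNReal.tsum_add]
        gcongr with w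
        rw [add_comm, ← ENNReal.ofReal_add (nrm2_nonneg _) (nrm2_nonneg _)]
        exact ENNReal.ofReal_le_ofReal (nrm2_sub_le _ _ _)
    _ ≤ ddist ν ρ + ddist ρ μ := by
        rw [ENNReal.tsum_add]
        exact add_le_add (le_ddist ν ρ hx hlam) (le_ddist ρ μ hx hlam)

lemma ddist_densMeas_unitCube_le (v w : Rd d) :
    ddist (densMeas ((unitCube d).indicator fun _ => w))
        (densMeas ((unitCube d).indicator fun _ => v)) ≤ 2 * ENNReal.ofReal (nrm2 (v - w)) := by
  refine iSup₂_le fun x _ => iSup₂_le fun lam hlam => ?_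
  have hlam₀ : 0 < lam := one_pos.trans_le hlam.1
  have hscale : ∀ k : ℕ, ∑' u : Fin d → ℤ, ENNReal.ofReal (nrm2
      (densMeas ((unitCube d).indicator fun _ => v) (dyadicCube k lam u x)
        - densMeas ((unitCube d).indicator fun _ => w) (dyadicCube k lam u x)))
        ≤ ENNReal.ofReal (nrm2 (v - w)) := fun k => by
    simp only [densMeas_indicator_const _ measurableSet_unitCube, ← smul_sub, nrm2_smul,
      abs_of_nonneg measureReal_nonneg, ENNReal.ofReal_mul measureReal_nonneg]
    have hfin : ∀ Q : Set (Rd d), volume (Q ∩ unitCube d) ≠ ⊤ := fun Q =>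
      measure_ne_top_of_subset Set.inter_subset_right (by simp [volume_unitCube])
    simp only [measureReal_def, ENNReal.ofReal_toReal (hfin _), ENNReal.tsum_mul_right]
    calc (∑' u : Fin d → ℤ, volume (dyadicCube k lam u x ∩ unitCube d))
          * ENNReal.ofReal (nrm2 (v - w))
        ≤ volume (unitCube d) * ENNReal.ofReal (nrm2 (v - w)) := by
          gcongr
          exact tsum_volume_dyadicCube_inter_le hlam₀ x measurableSet_unitCube
      _ = ENNReal.ofReal (nrm2 (v - w)) := by rw [volume_unitCube, one_mul]
  calc ∑' k : ℕ, (2 : ℝ≥0∞)⁻¹ ^ k * ∑' u : Fin d → ℤ, ENNReal.ofReal (nrm2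
          (densMeas ((unitCube d).indicator fun _ => v) (dyadicCube k lam u x)
            - densMeas ((unitCube d).indicator fun _ => w) (dyadicCube k lam u x)))
      ≤ ∑' k : ℕ, (2 : ℝ≥0∞)⁻¹ ^ k * ENNReal.ofReal (nrm2 (v - w)) := by
        gcongr with k
        exact hscale k
    _ = 2 * ENNReal.ofReal (nrm2 (v - w)) := by
        rw [ENNReal.tsum_mul_right, ENNReal.tsum_geometric, ENNReal.one_sub_inv_two, inv_inv]

variable {Ω' : Type*} [MeasurableSpace Ω'] (P : Measure Ω') (t : Edge d → Ω' → ℝ)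

lemma cubeSeq_mono {v w : Rd d} {ε ε' : ℝ} (hε' : 0 ≤ ε') (h : ε' + 2 * nrm2 (v - w) ≤ ε)
    (n : ℕ) : cubeSeq d P t w ε' n ≤ cubeSeq d P t v ε n := by
  refine mul_le_mul_of_nonneg_left (ENNReal.log_monotone (measure_mono ?_))
    (EReal.coe_nonneg.mpr (by positivity))
  rintro ω ⟨F, hF, hclose⟩
  refine ⟨F, hF, ?_⟩
  calc ddist (restr (streamMeas n F) (unitCube d)) (densMeas ((unitCube d).indicator fun _ => v))
      ≤ ddist (restr (streamMeas n F) (unitCube d)) (densMeas ((unitCube d).indicator fun _ => w))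
        + ddist (densMeas ((unitCube d).indicator fun _ => w))
          (densMeas ((unitCube d).indicator fun _ => v)) := ddist_triangle _ _ _
    _ ≤ ENNReal.ofReal ε' + ENNReal.ofReal (2 * nrm2 (v - w)) := by
        rw [ENNReal.ofReal_mul zero_le_two, ENNReal.ofReal_ofNat]
        exact add_le_add hclose (ddist_densMeas_unitCube_le v w)
    _ ≤ ENNReal.ofReal ε := by
        rw [← ENNReal.ofReal_add hε' (by positivity [nrm2_nonneg (v - w)])]
        exact ENNReal.ofReal_le_ofReal h

lemma neg_limsup_cubeSeq_le_Ielem {v w : Rd d} {ε : ℝ} (hε : 0 < ε) (h : 4 * nrm2 (v - w) ≤ ε) :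
    -limsup (cubeSeq d P t v ε) atTop ≤ Ielem d P t w := by
  refine le_iSup₂_of_le (ε / 2) (half_pos hε) (EReal.neg_le_neg_iff.mpr ?_)
  exact limsup_le_limsup (Eventually.of_forall
    (cubeSeq_mono P t (half_pos hε).le (by linarith)))

end Lemmas

theorem statement2_general
    (d : ℕ)
    {Ω' : Type*} [MeasurableSpace Ω'] (P : Measure Ω')
    (t : Edge d → Ω' → ℝ)
    (v : Rd d) (vseq : ℕ → Rd d) (hconv : Filter.Tendsto vseq Filter.atTop (nhds v)) :
    Ielem d P t v ≤ Filter.liminf (fun p => Ielem d P t (vseq p)) Filter.atTop := by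
  refine iSup₂_le fun ε hε => le_liminf_of_le (by isBoundedDefault) ?_
  have hdist : Tendsto (fun p => nrm2 (v - vseq p)) atTop (𝓝 0) := by
    rw [← nrm2_zero, ← sub_self v]
    exact (continuous_nrm2.tendsto _).comp (hconv.const_sub v)
  filter_upwards [hdist.eventually (ge_mem_nhds (div_pos hε four_pos))] with p hp
  exact neg_limsup_cubeSeq_le_Ielem P t hε (by linarith)

/-- Proposition 3.4, lower semicontinuity of the elementary rate function.
Fix `d ≥ 2` and a probability measure `G` on `[0,∞)` with bounded support; let the capacities
be i.i.d. with law `G`.  The map `I : ℝ^d → [0,∞]` is lower semi-continuous: for every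
`v ∈ ℝ^d` and every sequence `(v_p)` converging to `v`, `liminf_p I(v_p) ≥ I(v)`. -/
theorem statement2
    (d : ℕ) (hd : 2 ≤ d)
    (G : Measure ℝ) (hGprob : IsProbabilityMeasure G)
    (hGnonneg : G (Set.Iio 0) = 0) (hGbdd : ∃ b : ℝ, G (Set.Ici b) = 0)
    {Ω' : Type*} [MeasurableSpace Ω'] (P : Measure Ω') (hP : IsProbabilityMeasure P)
    (t : Edge d → Ω' → ℝ) (hmeas : ∀ e, Measurable (t e))
    (hlaw : ∀ e, P.map (t e) = G)
    (hindep : ProbabilityTheory.iIndepFun t P)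
    (v : Rd d) (vseq : ℕ → Rd d) (hconv : Filter.Tendsto vseq Filter.atTop (nhds v)) :
    Ielem d P t v ≤ Filter.liminf (fun p => Ielem d P t (vseq p)) Filter.atTop :=
  statement2_general d P t v vseq hconv

end FPP
end

section
/- Let M > 0 and n ≥ 1, and work in dimension d = 2. For any real numbers (f_in(j))_{j=1,…,n} with |f_in(j)| ≤ M for all j, there exists a stream f : 𝔼² → ℝ² such that: (i) f(e) = 0 for every edge e not belonging to [0,n)×[1,n]; (ii) ‖f(e)‖₂ ≤ M for every e ∈ 𝔼²; (iii) f(⟨(0,j),(1,j)⟩) = f_in(j)·e₁ and f(⟨(n−1,j),(n,j)⟩) = (n^{−1} Σ_{i=1}^n f_in(i))·e₁ for every j ∈ {1,…,n}; (iv) the node law holds at every vertex of ℤ² ∖ (({0}×{1,…,n}) ∪ ({n}×{1,…,n})). -/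
open scoped ENNReal

namespace FPP

/-! Row `j` carries a horizontal intensity interpolating linearly in `x ∈ [0, n - 1]` from
`f_in(j)` to the mean `m`, so each interior vertex of the row loses `(f_in(j) - m) / (n - 1)`.
The vertical intensity `(∑_{k ≤ j} (f_in(k) - m)) / (n - 1)` in the columns `1 ≤ x ≤ n - 1`
carries exactly this loss away; it vanishes for `j ≥ n` because the deviations from the mean sum
to zero, and it is at most `2 j (n - j) M / (n (n - 1)) ≤ M`. -/

open Finset

lemma abs_sum_le_card_mul {ι : Type*} (s : Finset ι) (f : ι → ℝ) {M : ℝ}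
    (h : ∀ k ∈ s, |f k| ≤ M) : |∑ k ∈ s, f k| ≤ #s * M :=
  (abs_sum_le_sum_abs f s).trans <| by simpa using sum_le_card_nsmul s _ M h

lemma abs_sub_mul_sub_le {a b t M : ℝ} (ha : |a| ≤ M) (hb : |b| ≤ M) (ht₀ : 0 ≤ t)
    (ht₁ : t ≤ 1) : |a - t * (a - b)| ≤ M :=
  calc |a - t * (a - b)| = |(1 - t) * a + t * b| := by ring_nf
    _ ≤ (1 - t) * |a| + t * |b| := by
      grw [abs_add_le, abs_mul, abs_mul, abs_of_nonneg ht₀, abs_of_nonneg (sub_nonneg.2 ht₁)]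
    _ ≤ (1 - t) * M + t * M := by gcongr
    _ = M := by ring

lemma natCast_card_Icc_one {j : ℤ} (hj : 0 ≤ j) : ((#(Icc 1 j) : ℕ) : ℝ) = j := by
  rw [Int.card_Icc, add_sub_cancel_right, ← Int.cast_natCast, Int.toNat_of_nonneg hj]

section MixingStream

variable (n : ℕ) (fin : ℤ → ℝ)

noncomputable def mean : ℝ := (∑ i ∈ Icc (1 : ℤ) n, fin i) / n

noncomputable def deviation (j : ℤ) : ℝ := if 1 ≤ j ∧ j ≤ n then fin j - mean n fin else 0

noncomputable def cumDeviation (j : ℤ) : ℝ := ∑ k ∈ Icc 1 j, deviation n fin k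

noncomputable def horizontalFlow (x j : ℤ) : ℝ :=
  if 0 ≤ x ∧ x < n ∧ 1 ≤ j ∧ j ≤ n then
    fin j - (x : ℝ) / ((n : ℝ) - 1) * (fin j - mean n fin)
  else 0

noncomputable def verticalFlow (x j : ℤ) : ℝ :=
  if 1 ≤ x ∧ x < n then cumDeviation n fin j / ((n : ℝ) - 1) else 0

noncomputable def mixingStream : Streamm 2 := fun e =>
  if e.2 = 0 then horizontalFlow n fin (e.1 0) (e.1 1) else verticalFlow n fin (e.1 0) (e.1 1)

variable {n fin}

lemma deviation_of_mem {j : ℤ} (hj : j ∈ Icc 1 (n : ℤ)) :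
    deviation n fin j = fin j - mean n fin :=
  if_pos (mem_Icc.mp hj)

lemma sum_deviation : ∑ k ∈ Icc (1 : ℤ) n, deviation n fin k = 0 := by
  rcases n.eq_zero_or_pos with rfl | hn
  · simp
  rw [sum_congr rfl fun k => deviation_of_mem, sum_sub_distrib, sum_const,
    nsmul_eq_mul, natCast_card_Icc_one n.cast_nonneg, Int.cast_natCast, mean,
    mul_div_cancel₀ _ (by positivity), sub_self]

lemma cumDeviation_of_nonpos {j : ℤ} (hj : j ≤ 0) : cumDeviation n fin j = 0 := by
  rw [cumDeviation, Icc_eq_empty_of_lt (by omega), sum_empty]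

lemma cumDeviation_of_le {j : ℤ} (hj : n ≤ j) : cumDeviation n fin j = 0 := by
  rw [cumDeviation, ← sum_subset (Icc_subset_Icc_right hj), sum_deviation]
  intro k _ hk
  rw [deviation, if_neg (by simpa using hk)]

lemma cumDeviation_sub_one (j : ℤ) :
    cumDeviation n fin j - cumDeviation n fin (j - 1) = deviation n fin j := by
  rcases le_or_gt j 0 with hj | hj
  · rw [cumDeviation_of_nonpos hj, cumDeviation_of_nonpos (by omega), deviation,
      if_neg (by omega), sub_zero]
  · rw [cumDeviation, ← insert_Icc_sub_one_right_eq_Icc (by omega : 1 ≤ j),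
      sum_insert (by simp), cumDeviation, add_sub_cancel_right]

lemma cumDeviation_eq {j : ℤ} (hj₀ : 0 ≤ j) (hjn : j ≤ n) :
    cumDeviation n fin j = ∑ k ∈ Icc 1 j, fin k - j * mean n fin := by
  rw [cumDeviation, sum_congr rfl fun k hk => deviation_of_mem (Icc_subset_Icc_right hjn hk),
    sum_sub_distrib, sum_const, nsmul_eq_mul, natCast_card_Icc_one hj₀]

variable {M : ℝ}

lemma abs_mean_le (hM : 0 ≤ M) (hfin : ∀ j : ℤ, 1 ≤ j → j ≤ n → |fin j| ≤ M) :
    |mean n fin| ≤ M := by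
  rw [mean, abs_div, Nat.abs_cast]
  refine div_le_of_le_mul₀ n.cast_nonneg hM ?_
  have := abs_sum_le_card_mul (Icc (1 : ℤ) n) fin fun k hk =>
    hfin k (mem_Icc.mp hk).1 (mem_Icc.mp hk).2
  rwa [natCast_card_Icc_one n.cast_nonneg, Int.cast_natCast, mul_comm] at this

lemma abs_cumDeviation_le (hM : 0 ≤ M) (hn : 1 ≤ n)
    (hfin : ∀ j : ℤ, 1 ≤ j → j ≤ n → |fin j| ≤ M) (j : ℤ) :
    |cumDeviation n fin j| ≤ (n - 1) * M := by
  have hn' : (1 : ℝ) ≤ n := by exact_mod_cast hn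
  rcases le_or_gt j 0 with hj₀ | hj₀
  · rw [cumDeviation_of_nonpos hj₀, abs_zero]; nlinarith
  rcases le_or_gt (n : ℤ) j with hjn | hjn
  · rw [cumDeviation_of_le hjn, abs_zero]; nlinarith
  have hbound : ∀ s ⊆ Icc (1 : ℤ) n, |∑ k ∈ s, fin k| ≤ #s * M := fun s hs =>
    abs_sum_le_card_mul s fin fun k hk => hfin k (mem_Icc.mp (hs hk)).1 (mem_Icc.mp (hs hk)).2
  have hsub : Icc 1 j ⊆ Icc (1 : ℤ) n := Icc_subset_Icc_right hjn.le
  have hhead := hbound _ hsub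
  have htail := hbound (Icc 1 n \ Icc 1 j) sdiff_subset
  rw [sum_sdiff_eq_sub hsub, card_sdiff_of_subset hsub, Nat.cast_sub (card_le_card hsub),
    natCast_card_Icc_one n.cast_nonneg, natCast_card_Icc_one hj₀.le, Int.cast_natCast] at htail
  rw [natCast_card_Icc_one hj₀.le] at hhead
  -- weighting the head sum by `n - j` and the tail sum by `j`, each contributes `j (n - j) M`
  have hsplit : n * cumDeviation n fin j = (n - j) * ∑ k ∈ Icc 1 j, fin k
      - j * (∑ k ∈ Icc (1 : ℤ) n, fin k - ∑ k ∈ Icc 1 j, fin k) := by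
    rw [cumDeviation_eq hj₀.le hjn.le, mean]; field_simp; ring
  have hquad : 2 * j * (n - j) ≤ (n : ℝ) * (n - 1) := by
    have : 2 * j * (n - j) ≤ (n : ℤ) * (n - 1) := by nlinarith
    exact_mod_cast this
  have hj : (0 : ℝ) ≤ j := by exact_mod_cast hj₀.le
  have hnj : (0 : ℝ) ≤ n - j := by
    have : (j : ℝ) < n := by exact_mod_cast hjn
    linarith
  refine le_of_mul_le_mul_left ?_ (by linarith : (0 : ℝ) < n)
  calc n * |cumDeviation n fin j| = |n * cumDeviation n fin j| := by
        rw [abs_mul, Nat.abs_cast]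
    _ ≤ (n - j) * (j * M) + j * ((n - j) * M) := by
        rw [hsplit]
        grw [abs_sub, abs_mul, abs_mul, abs_of_nonneg hnj, abs_of_nonneg hj, hhead, htail]
    _ = 2 * j * (n - j) * M := by ring
    _ ≤ n * (n - 1) * M := by gcongr
    _ = n * ((n - 1) * M) := by ring

lemma abs_horizontalFlow_le (hM : 0 ≤ M) (hfin : ∀ j : ℤ, 1 ≤ j → j ≤ n → |fin j| ≤ M)
    (x j : ℤ) : |horizontalFlow n fin x j| ≤ M := by
  rw [horizontalFlow]
  split_ifs with h
  · obtain ⟨hx₀, hxn, hj₁, hjn⟩ := h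
    have hx₀' : (0 : ℝ) ≤ x := by exact_mod_cast hx₀
    have hxn' : (x : ℝ) ≤ n - 1 := by
      have : (x : ℝ) + 1 ≤ n := by exact_mod_cast hxn
      linarith
    exact abs_sub_mul_sub_le (hfin j hj₁ hjn) (abs_mean_le hM hfin)
      (div_nonneg hx₀' (hx₀'.trans hxn')) (div_le_one_of_le₀ hxn' (hx₀'.trans hxn'))
  · rwa [abs_zero]

lemma abs_verticalFlow_le (hM : 0 ≤ M) (hfin : ∀ j : ℤ, 1 ≤ j → j ≤ n → |fin j| ≤ M)
    (x j : ℤ) : |verticalFlow n fin x j| ≤ M := by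
  rw [verticalFlow]
  split_ifs with h
  · have hn : (1 : ℝ) < n := by exact_mod_cast (by omega : 1 < n)
    rw [abs_div, abs_of_pos (sub_pos.2 hn)]
    exact div_le_of_le_mul₀ (sub_pos.2 hn).le hM <| by
      rw [mul_comm]; exact abs_cumDeviation_le hM (by omega) hfin j
  · rwa [abs_zero]

lemma abs_mixingStream_le (hM : 0 ≤ M) (hfin : ∀ j : ℤ, 1 ≤ j → j ≤ n → |fin j| ≤ M)
    (e : Edge 2) : |mixingStream n fin e| ≤ M := by
  rw [mixingStream]
  split_ifs
  exacts [abs_horizontalFlow_le hM hfin _ _, abs_verticalFlow_le hM hfin _ _]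

lemma mixingStream_eq_zero {e : Edge 2}
    (he : ¬(0 ≤ e.1 0 ∧ e.1 0 < n ∧ 1 ≤ e.1 1 ∧ e.1 1 ≤ n)) : mixingStream n fin e = 0 := by
  rw [mixingStream, horizontalFlow, verticalFlow, if_neg he]
  split_ifs with _ hx
  · rfl
  · obtain hj | hj : e.1 1 ≤ 0 ∨ n ≤ e.1 1 := by omega
    · rw [cumDeviation_of_nonpos hj, zero_div]
    · rw [cumDeviation_of_le hj, zero_div]
  · rfl

lemma horizontalFlow_zero {j : ℤ} (hj₁ : 1 ≤ j) (hjn : j ≤ n) :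
    horizontalFlow n fin 0 j = fin j := by
  rw [horizontalFlow, if_pos (by omega)]
  simp

lemma horizontalFlow_last {j : ℤ} (hj₁ : 1 ≤ j) (hjn : j ≤ n) :
    horizontalFlow n fin (n - 1) j = mean n fin := by
  rw [horizontalFlow, if_pos (by omega)]
  obtain rfl | hn := eq_or_ne n 1
  · obtain rfl : j = 1 := by omega
    simp [mean]
  · have : (n : ℝ) - 1 ≠ 0 := sub_ne_zero.2 (by exact_mod_cast hn)
    push_cast
    rw [div_self this]
    ring

lemma verticalFlow_sub_one (x j : ℤ) :
    verticalFlow n fin x j - verticalFlow n fin x (j - 1) =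
      if 1 ≤ x ∧ x < n then deviation n fin j / ((n : ℝ) - 1) else 0 := by
  rw [verticalFlow, verticalFlow]
  split_ifs
  · rw [← sub_div, cumDeviation_sub_one]
  · rw [sub_zero]

lemma horizontalFlow_sub_one {x : ℤ} (hx₁ : 1 ≤ x) (hxn : x < n) (j : ℤ) :
    horizontalFlow n fin x j - horizontalFlow n fin (x - 1) j =
      -(deviation n fin j / ((n : ℝ) - 1)) := by
  rw [horizontalFlow, horizontalFlow, deviation]
  by_cases hj : 1 ≤ j ∧ j ≤ n
  · have : (n : ℝ) - 1 ≠ 0 := sub_ne_zero.2 (by exact_mod_cast (by omega : n ≠ 1))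
    rw [if_pos (by omega), if_pos (by omega), if_pos hj]
    field_simp
    push_cast
    ring
  · rw [if_neg (by omega), if_neg (by omega), if_neg hj]
    simp

lemma mixingStream_zero (z : Fin 2 → ℤ) :
    mixingStream n fin (z, 0) = horizontalFlow n fin (z 0) (z 1) := rfl

lemma mixingStream_one (z : Fin 2 → ℤ) :
    mixingStream n fin (z, 1) = verticalFlow n fin (z 0) (z 1) := rfl

lemma nodeLaw_mixingStream {z : Fin 2 → ℤ} (h₀ : ¬(z 0 = 0 ∧ 1 ≤ z 1 ∧ z 1 ≤ n))
    (hn : ¬(z 0 = n ∧ 1 ≤ z 1 ∧ z 1 ≤ n)) : nodeLaw (mixingStream n fin) z := by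
  rw [nodeLaw, Fin.sum_univ_two, mixingStream_zero, mixingStream_zero, mixingStream_one,
    mixingStream_one]
  simp only [unshift, Fin.isValue, ↓reduceIte, one_ne_zero, zero_ne_one, sub_zero]
  rw [verticalFlow_sub_one]
  split_ifs with hx
  · rw [horizontalFlow_sub_one hx.1 hx.2, neg_add_cancel]
  · rw [horizontalFlow, horizontalFlow, if_neg (by omega), if_neg (by omega)]
    ring

end MixingStream

theorem statement15_general (M : ℝ) (hM : 0 < M) (n : ℕ)
    (fin : ℤ → ℝ) (hfin : ∀ j : ℤ, 1 ≤ j → j ≤ (n : ℤ) → |fin j| ≤ M) :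
    ∃ F : Streamm 2,
      (∀ e : Edge 2,
        ¬(0 ≤ e.1 0 ∧ e.1 0 < (n : ℤ) ∧ 1 ≤ e.1 1 ∧ e.1 1 ≤ (n : ℤ)) → F e = 0) ∧
      (∀ e : Edge 2, |F e| ≤ M) ∧
      (∀ j : ℤ, 1 ≤ j → j ≤ (n : ℤ) →
        F (![0, j], 0) = fin j ∧
        F (![(n : ℤ) - 1, j], 0) = (1 / (n : ℝ)) * ∑ i ∈ Finset.Icc (1 : ℤ) (n : ℤ), fin i) ∧
      (∀ z : Fin 2 → ℤ,
        ¬(z 0 = 0 ∧ 1 ≤ z 1 ∧ z 1 ≤ (n : ℤ)) →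
        ¬(z 0 = (n : ℤ) ∧ 1 ≤ z 1 ∧ z 1 ≤ (n : ℤ)) →
        nodeLaw F z) := by
  refine ⟨mixingStream n fin, fun e => mixingStream_eq_zero, abs_mixingStream_le hM.le hfin,
    fun j hj₁ hjn => ⟨horizontalFlow_zero hj₁ hjn, ?_⟩, fun z => nodeLaw_mixingStream⟩
  rw [one_div_mul_eq_div, ← mean]
  exact horizontalFlow_last hj₁ hjn

/-- Lemma 4.2, mixing in dimension 2.
Let `M > 0`, `n ≥ 1` and `(f_in(j))_{1 ≤ j ≤ n}` with `|f_in(j)| ≤ M`.  There is a stream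
`f : 𝔼² → ℝ²` vanishing on edges whose left endpoint is outside `[0,n) × [1,n]`, with
`‖f(e)‖₂ ≤ M` everywhere, with `f(⟨(0,j),(1,j)⟩) = f_in(j) e₁` and
`f(⟨(n-1,j),(n,j)⟩) = (n⁻¹ ∑_{i=1}^n f_in(i)) e₁` for every `j ∈ {1,…,n}`, and satisfying
the node law at every vertex outside `({0} × {1,…,n}) ∪ ({n} × {1,…,n})`. -/
theorem statement15 (M : ℝ) (hM : 0 < M) (n : ℕ) (hn : 1 ≤ n)
    (fin : ℤ → ℝ) (hfin : ∀ j : ℤ, 1 ≤ j → j ≤ (n : ℤ) → |fin j| ≤ M) :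
    ∃ F : Streamm 2,
      (∀ e : Edge 2,
        ¬(0 ≤ e.1 0 ∧ e.1 0 < (n : ℤ) ∧ 1 ≤ e.1 1 ∧ e.1 1 ≤ (n : ℤ)) → F e = 0) ∧
      (∀ e : Edge 2, |F e| ≤ M) ∧
      (∀ j : ℤ, 1 ≤ j → j ≤ (n : ℤ) →
        F (![0, j], 0) = fin j ∧
        F (![(n : ℤ) - 1, j], 0) = (1 / (n : ℝ)) * ∑ i ∈ Finset.Icc (1 : ℤ) (n : ℤ), fin i) ∧
      (∀ z : Fin 2 → ℤ,
        ¬(z 0 = 0 ∧ 1 ≤ z 1 ∧ z 1 ≤ (n : ℤ)) →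
        ¬(z 0 = (n : ℤ) ∧ 1 ≤ z 1 ∧ z 1 ≤ (n : ℤ)) →
        nodeLaw F z) :=
  statement15_general M hM n fin hfin

end FPP
end

section
/- Let d ≥ 2, M > 0 and n ≥ 1. Let (f_in(y))_{y∈{1,…,n}^{d−1}} and (f_out(y))_{y∈{1,…,n}^{d−1}} be real numbers with |f_in(y)| ≤ M and |f_out(y)| ≤ M for all y, and Σ_y f_in(y) = Σ_y f_out(y). Then for every integer m ≥ 2(d−1)n there exists a stream f : 𝔼^d → ℝ^d such that: (i) f(e) = 0 for every edge e not belonging to [0,m)×[1,n]^{d−1}; (ii) ‖f(e)‖₂ ≤ M for every e; (iii) f(⟨(0,y),(1,y)⟩) = f_in(y)·e₁ and f(⟨(m−1,y),(m,y)⟩) = f_out(y)·e₁ for every y ∈ {1,…,n}^{d−1}; (iv) the node law holds at every vertex of ℤ^d ∖ (({0}×{1,…,n}^{d−1}) ∪ ({m}×{1,…,n}^{d−1})). Moreover, if the outputs are uniform, i.e. f_out(y) = n^{−(d−1)} Σ_{z∈{1,…,n}^{d−1}} f_in(z) for all y, then such a stream exists for every integer m ≥ (d−1)n. -/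
/-!
Write `A_k` for averaging a profile on `{1,…,n}^{d-1}` along the lines in direction `k`; then
`A_{d-1} ∘ ⋯ ∘ A_1` turns any profile into its mean. Each `A_k` is spread linearly over `n - 1`
consecutive columns of the tube, so from one column to the next the longitudinal flux changes
by `(A_k g - g) / (n - 1)` with `|g| ≤ M`. This change has zero sum on every `k`-line, so it can
be routed inside the column along the `k`-lines by partial line sums, which gives the node law;
summed over `i` of the `n` points of a line, `A_k g - g` is at most `2 i (n - i) M / n ≤ (n - 1) M`,
so the transverse flux is bounded by `M`. Running `f_in` forward from column `0` and `f_out`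
backward from column `m - 1`, both reach the common mean after `(d - 1)(n - 1)` columns; for
uniform outputs the backward half is not needed.
-/

open scoped ENNReal

namespace FPP

/-- the index box `{1,…,n}^{d-1}` (here `d = d₀ + 1`) -/
noncomputable def boxIdx (d₀ n : ℕ) : Finset (Fin d₀ → ℤ) :=
  Finset.Icc (fun _ => (1 : ℤ)) (fun _ => (n : ℤ))

/-- The conclusion of the mixing lemma: `F` vanishes outside `[0,m) × [1,n]^{d-1}`, is
bounded by `M`, has inputs `f_in` on `{0} × {1,…,n}^{d-1}` and outputs `f_out` on
`{m-1} × {1,…,n}^{d-1}` (in the direction `e₁`), and satisfies the node law at every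
vertex outside `({0} ∪ {m}) × {1,…,n}^{d-1}`. -/
def mixProp (d₀ : ℕ) (M : ℝ) (n m : ℕ) (fin fout : (Fin d₀ → ℤ) → ℝ)
    (F : Streamm (d₀ + 1)) : Prop :=
  (∀ e : Edge (d₀ + 1),
    ¬(0 ≤ e.1 0 ∧ e.1 0 < (m : ℤ) ∧ ∀ k : Fin d₀, 1 ≤ e.1 k.succ ∧ e.1 k.succ ≤ (n : ℤ)) →
    F e = 0) ∧
  (∀ e : Edge (d₀ + 1), |F e| ≤ M) ∧
  (∀ y : Fin d₀ → ℤ, (∀ k, 1 ≤ y k ∧ y k ≤ (n : ℤ)) →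
    F (Fin.cons 0 y, 0) = fin y ∧ F (Fin.cons ((m : ℤ) - 1) y, 0) = fout y) ∧
  (∀ z : Fin (d₀ + 1) → ℤ,
    ¬(z 0 = 0 ∧ ∀ k : Fin d₀, 1 ≤ z k.succ ∧ z k.succ ≤ (n : ℤ)) →
    ¬(z 0 = (m : ℤ) ∧ ∀ k : Fin d₀, 1 ≤ z k.succ ∧ z k.succ ≤ (n : ℤ)) →
    nodeLaw F z)

variable {d₀ : ℕ}

lemma mem_boxIdx {n : ℕ} {y : Fin d₀ → ℤ} :
    y ∈ boxIdx d₀ n ↔ ∀ k, 1 ≤ y k ∧ y k ≤ (n : ℤ) := by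
  simp [boxIdx, Finset.mem_Icc, Pi.le_def, forall_and]

lemma update_mem_boxIdx_iff {n : ℕ} {y : Fin d₀ → ℤ} {k : Fin d₀} {v : ℤ} :
    Function.update y k v ∈ boxIdx d₀ n ↔
      (1 ≤ v ∧ v ≤ (n : ℤ)) ∧ ∀ j ≠ k, 1 ≤ y j ∧ y j ≤ (n : ℤ) := by
  simp only [mem_boxIdx]
  constructor
  · intro h
    exact ⟨by simpa using h k, fun j hj => by simpa [hj] using h j⟩
  · rintro ⟨hv, hy⟩ j
    rcases eq_or_ne j k with rfl | hj
    · simpa using hv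
    · simpa [hj] using hy j hj

lemma update_mem_boxIdx {n : ℕ} {y : Fin d₀ → ℤ} (hy : y ∈ boxIdx d₀ n) (k : Fin d₀) {v : ℤ}
    (hv₁ : 1 ≤ v) (hvn : v ≤ (n : ℤ)) : Function.update y k v ∈ boxIdx d₀ n :=
  update_mem_boxIdx_iff.2 ⟨⟨hv₁, hvn⟩, fun j _ => mem_boxIdx.1 hy j⟩

lemma card_Icc_one_natCast (n : ℕ) : (Finset.Icc (1 : ℤ) n).card = n := by
  rw [Int.card_Icc]; omega

lemma card_boxIdx (n : ℕ) : (boxIdx d₀ n).card = n ^ d₀ := by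
  simp [boxIdx, Pi.card_Icc]

noncomputable def lineAvg (n : ℕ) (k : Fin d₀) (h : (Fin d₀ → ℤ) → ℝ) (y : Fin d₀ → ℤ) : ℝ :=
  (∑ j ∈ Finset.Icc (1 : ℤ) n, h (Function.update y k j)) / n

lemma lineAvg_update (n : ℕ) (k : Fin d₀) (h : (Fin d₀ → ℤ) → ℝ) (y : Fin d₀ → ℤ) (v : ℤ) :
    lineAvg n k h (Function.update y k v) = lineAvg n k h y := by
  simp only [lineAvg, Function.update_idem]

lemma abs_lineAvg_le {n : ℕ} {M : ℝ} {h : (Fin d₀ → ℤ) → ℝ}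
    (hb : ∀ y ∈ boxIdx d₀ n, |h y| ≤ M) (k : Fin d₀) {y : Fin d₀ → ℤ} (hy : y ∈ boxIdx d₀ n) :
    |lineAvg n k h y| ≤ M := by
  have hsum : |∑ j ∈ Finset.Icc (1 : ℤ) n, h (Function.update y k j)| ≤ M * n := by
    refine (Finset.abs_sum_le_sum_abs _ _).trans ?_
    refine (Finset.sum_le_card_nsmul _ _ M fun j hj => hb _ ?_).trans_eq ?_
    · rw [Finset.mem_Icc] at hj
      exact update_mem_boxIdx hy k hj.1 hj.2
    · rw [card_Icc_one_natCast, nsmul_eq_mul, mul_comm]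
  rw [lineAvg, abs_div, Nat.abs_cast]
  exact div_le_of_le_mul₀ (Nat.cast_nonneg n) ((abs_nonneg _).trans (hb y hy)) hsum

lemma sum_lineAvg_update {n : ℕ} (hn : n ≠ 0) (k : Fin d₀) (h : (Fin d₀ → ℤ) → ℝ)
    (y : Fin d₀ → ℤ) :
    ∑ l ∈ Finset.Icc (1 : ℤ) n, lineAvg n k h (Function.update y k l) =
      ∑ l ∈ Finset.Icc (1 : ℤ) n, h (Function.update y k l) := by
  rw [Finset.sum_congr rfl fun l _ => lineAvg_update n k h y l, Finset.sum_const,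
    card_Icc_one_natCast, nsmul_eq_mul, lineAvg]
  field_simp

lemma sum_boxIdx_product_update (n : ℕ) (k : Fin d₀) (h : (Fin d₀ → ℤ) → ℝ) :
    ∑ p ∈ boxIdx d₀ n ×ˢ Finset.Icc (1 : ℤ) n, h (Function.update p.1 k p.2) =
      ∑ p ∈ boxIdx d₀ n ×ˢ Finset.Icc (1 : ℤ) n, h p.1 := by
  let φ : (Fin d₀ → ℤ) × ℤ → (Fin d₀ → ℤ) × ℤ := fun p => (Function.update p.1 k p.2, p.1 k)
  have hφ : ∀ p ∈ boxIdx d₀ n ×ˢ Finset.Icc (1 : ℤ) n,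
      φ p ∈ boxIdx d₀ n ×ˢ Finset.Icc (1 : ℤ) n := by
    rintro ⟨y, j⟩ hp
    rw [Finset.mem_product, Finset.mem_Icc] at hp ⊢
    exact ⟨update_mem_boxIdx hp.1 k hp.2.1 hp.2.2, mem_boxIdx.1 hp.1 k⟩
  exact Finset.sum_nbij' φ φ hφ hφ (by simp [φ]) (by simp [φ]) (by simp [φ])

lemma sum_boxIdx_lineAvg {n : ℕ} (hn : n ≠ 0) (k : Fin d₀) (h : (Fin d₀ → ℤ) → ℝ) :
    ∑ y ∈ boxIdx d₀ n, lineAvg n k h y = ∑ y ∈ boxIdx d₀ n, h y := by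
  calc ∑ y ∈ boxIdx d₀ n, lineAvg n k h y
      = (∑ p ∈ boxIdx d₀ n ×ˢ Finset.Icc (1 : ℤ) n, h (Function.update p.1 k p.2)) / n := by
        simp only [lineAvg, ← Finset.sum_div, Finset.sum_product]
    _ = ∑ y ∈ boxIdx d₀ n, h y := by
        rw [sum_boxIdx_product_update, Finset.sum_product]
        simp only [Finset.sum_const, card_Icc_one_natCast, nsmul_eq_mul, ← Finset.mul_sum]
        field_simp

noncomputable def iterAvg (n : ℕ) (h : (Fin d₀ → ℤ) → ℝ) : ℕ → (Fin d₀ → ℤ) → ℝ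
  | 0 => h
  | s + 1 => if hs : s < d₀ then lineAvg n ⟨s, hs⟩ (iterAvg n h s) else iterAvg n h s

variable {n : ℕ} {h : (Fin d₀ → ℤ) → ℝ}

lemma abs_iterAvg_le {M : ℝ} (hb : ∀ y ∈ boxIdx d₀ n, |h y| ≤ M) (s : ℕ) :
    ∀ y ∈ boxIdx d₀ n, |iterAvg n h s y| ≤ M := by
  induction s with
  | zero => exact hb
  | succ s ih =>
    intro y hy
    rw [iterAvg]
    split
    · exact abs_lineAvg_le ih _ hy
    · exact ih y hy

lemma sum_boxIdx_iterAvg (hn : n ≠ 0) (s : ℕ) :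
    ∑ y ∈ boxIdx d₀ n, iterAvg n h s y = ∑ y ∈ boxIdx d₀ n, h y := by
  induction s with
  | zero => rfl
  | succ s ih =>
    rw [iterAvg]
    split
    · rw [sum_boxIdx_lineAvg hn, ih]
    · exact ih

lemma iterAvg_congr (s : ℕ) {y y' : Fin d₀ → ℤ} (hyy' : ∀ j : Fin d₀, s ≤ j → y j = y' j) :
    iterAvg n h s y = iterAvg n h s y' := by
  induction s generalizing y y' with
  | zero => rw [funext fun j => hyy' j (Nat.zero_le _)]
  | succ s ih =>
    rw [iterAvg]
    split_ifs with hs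
    · simp only [lineAvg]
      congr 1
      refine Finset.sum_congr rfl fun l _ => ih fun j hj => ?_
      rcases eq_or_ne j ⟨s, hs⟩ with rfl | hne
      · simp
      · have hsj : s + 1 ≤ (j : ℕ) := by
          have : (j : ℕ) ≠ s := fun h => hne (Fin.ext h)
          omega
        simp [hne, hyy' j hsj]
    · exact ih fun j hj => hyy' j (by omega)

lemma iterAvg_of_le {s : ℕ} (hs : d₀ ≤ s) : iterAvg n h s = iterAvg n h d₀ := by
  induction s, hs using Nat.le_induction with
  | base => rfl
  | succ s hs ih => rw [iterAvg, dif_neg (by omega), ih]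

lemma iterAvg_dim_eq_sum_div (hn : n ≠ 0) (y : Fin d₀ → ℤ) :
    iterAvg n h d₀ y = (∑ z ∈ boxIdx d₀ n, h z) / (n : ℝ) ^ d₀ := by
  have hconst : ∀ z, iterAvg n h d₀ z = iterAvg n h d₀ y :=
    fun z => iterAvg_congr d₀ fun j hj => absurd j.isLt (by omega)
  rw [← sum_boxIdx_iterAvg hn d₀, Finset.sum_congr rfl fun z _ => hconst z, Finset.sum_const,
    card_boxIdx, nsmul_eq_mul]
  field_simp
  push_cast
  ring

lemma iterAvg_one {y : Fin d₀ → ℤ} (hy : y ∈ boxIdx d₀ 1) (s : ℕ) : iterAvg 1 h s y = h y := by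
  induction s with
  | zero => rfl
  | succ s ih =>
    rw [iterAvg]
    split_ifs with hs
    · have hys : y ⟨s, hs⟩ = 1 := le_antisymm (mem_boxIdx.1 hy _).2 (mem_boxIdx.1 hy _).1
      simp [lineAvg, ← hys, ih]
    · exact ih

lemma abs_card_mul_sum_div_sub_sum_le {ι : Type*} [DecidableEq ι] {s u : Finset ι}
    (hsu : s ⊆ u) {g : ι → ℝ} {M : ℝ} (hg : ∀ x ∈ u, |g x| ≤ M) :
    |(s.card : ℝ) * (∑ x ∈ u, g x) / u.card - ∑ x ∈ s, g x| ≤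
      2 * s.card * (u.card - s.card) * M / u.card := by
  rcases u.eq_empty_or_nonempty with rfl | hu
  · simp [Finset.subset_empty.1 hsu]
  have hbound : ∀ t ⊆ u, |∑ x ∈ t, g x| ≤ t.card * M := fun t ht =>
    (Finset.abs_sum_le_sum_abs _ _).trans <|
      (Finset.sum_le_card_nsmul _ _ M fun x hx => hg x (ht hx)).trans_eq (nsmul_eq_mul _ _)
  have hcard : (u.card : ℝ) = s.card + (u \ s).card := by
    rw [Finset.card_sdiff_of_subset hsu, Nat.cast_sub (Finset.card_le_card hsu)]; ring
  have hu₀ : (0 : ℝ) < u.card := by exact_mod_cast hu.card_pos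
  rw [← Finset.sum_sdiff hsu, hcard] at *
  have hS := hbound s hsu
  have hR := hbound (u \ s) Finset.sdiff_subset
  set a : ℝ := (s.card : ℝ)
  set b : ℝ := ((u \ s).card : ℝ)
  set S := ∑ x ∈ s, g x
  set R := ∑ x ∈ u \ s, g x
  have ha : 0 ≤ a := Nat.cast_nonneg _
  have hb : 0 ≤ b := Nat.cast_nonneg _
  have hsplit : a * (R + S) / (a + b) - S = (a * R - b * S) / (a + b) := by
    field_simp; ring
  rw [hsplit, abs_div, abs_of_pos hu₀, div_le_div_iff_of_pos_right hu₀, add_sub_cancel_left]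
  calc |a * R - b * S| ≤ a * |R| + b * |S| := by
        simpa [abs_mul, abs_of_nonneg ha, abs_of_nonneg hb] using abs_sub (a * R) (b * S)
    _ ≤ a * (b * M) + b * (a * M) := by gcongr
    _ = 2 * a * b * M := by ring

/-- For `n = 1` (`t / 0 = 0`, `x / 0 = 0`) this stays at `h`, which is harmless since averaging
over lines of length `1` does nothing. -/
noncomputable def avgProfile (n : ℕ) (h : (Fin d₀ → ℤ) → ℝ) (t : ℕ) (y : Fin d₀ → ℤ) : ℝ :=
  iterAvg n h (t / (n - 1)) y + ((t % (n - 1) : ℕ) : ℝ) / ((n - 1 : ℕ) : ℝ) *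
    (iterAvg n h (t / (n - 1) + 1) y - iterAvg n h (t / (n - 1)) y)

lemma avgProfile_zero : avgProfile n h 0 = h := by
  funext y; simp [avgProfile, iterAvg]

lemma abs_avgProfile_le {M : ℝ} (hb : ∀ y ∈ boxIdx d₀ n, |h y| ≤ M) (t : ℕ) {y : Fin d₀ → ℤ}
    (hy : y ∈ boxIdx d₀ n) : |avgProfile n h t y| ≤ M := by
  set c : ℝ := ((t % (n - 1) : ℕ) : ℝ) / ((n - 1 : ℕ) : ℝ)
  have hc₀ : 0 ≤ c := by positivity
  have hc₁ : c ≤ 1 := by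
    rcases Nat.eq_zero_or_pos (n - 1) with hL | hL
    · simp [c, hL]
    · rw [div_le_one (by exact_mod_cast hL)]
      exact_mod_cast (Nat.mod_lt _ hL).le
  have h₁ := abs_le.1 (abs_iterAvg_le hb (t / (n - 1)) y hy)
  have h₂ := abs_le.1 (abs_iterAvg_le hb (t / (n - 1) + 1) y hy)
  rw [avgProfile, abs_le]
  constructor <;> nlinarith

lemma avgProfile_of_le (hn : 1 ≤ n) {t : ℕ} (ht : d₀ * (n - 1) ≤ t) {y : Fin d₀ → ℤ}
    (hy : y ∈ boxIdx d₀ n) : avgProfile n h t y = iterAvg n h d₀ y := by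
  rcases Nat.eq_zero_or_pos (n - 1) with hL | hL
  · obtain rfl : n = 1 := by omega
    simp [avgProfile, iterAvg_one hy]
  · have hq : d₀ ≤ t / (n - 1) := (Nat.le_div_iff_mul_le hL).2 ht
    rw [avgProfile, iterAvg_of_le hq, iterAvg_of_le (hq.trans (Nat.le_succ _))]
    ring

lemma avgProfile_succ_sub (t : ℕ) (y : Fin d₀ → ℤ) :
    avgProfile n h (t + 1) y - avgProfile n h t y =
      1 / ((n - 1 : ℕ) : ℝ) *
        (iterAvg n h (t / (n - 1) + 1) y - iterAvg n h (t / (n - 1)) y) := by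
  rw [avgProfile, avgProfile]
  generalize n - 1 = L
  rcases Nat.eq_zero_or_pos L with rfl | hL
  · simp
  have hL' : (L : ℝ) ≠ 0 := by positivity
  have htqr := Nat.div_add_mod t L
  have hr := Nat.mod_lt t hL
  by_cases hr₁ : t % L + 1 < L
  · obtain ⟨hq, hr'⟩ := (Nat.div_mod_unique hL).2 (⟨by omega, hr₁⟩ :
      t % L + 1 + L * (t / L) = t + 1 ∧ t % L + 1 < L)
    rw [hq, hr']
    push_cast
    field_simp
    ring
  · obtain ⟨hq, hr'⟩ := (Nat.div_mod_unique hL).2 (⟨by rw [Nat.mul_succ]; omega, hL⟩ :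
      0 + L * (t / L + 1) = t + 1 ∧ 0 < L)
    have hrL : ((t % L : ℕ) : ℝ) = L - 1 := by
      rw [show t % L = L - 1 by omega, Nat.cast_sub (by omega)]; simp
    rw [hq, hr', hrL]
    field_simp
    ring

def IsAveragingStep (n : ℕ) (M : ℝ) (k : Fin d₀) (D : (Fin d₀ → ℤ) → ℝ) : Prop :=
  ∃ g : (Fin d₀ → ℤ) → ℝ, ∃ a : ℝ, (∀ y ∈ boxIdx d₀ n, |g y| ≤ M) ∧ |a| * ((n : ℝ) - 1) ≤ 1 ∧
    ∀ y ∈ boxIdx d₀ n, D y = a * (lineAvg n k g y - g y)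

variable {M : ℝ} {k : Fin d₀} {D : (Fin d₀ → ℤ) → ℝ}

lemma IsAveragingStep.congr {D' : (Fin d₀ → ℤ) → ℝ} (hD : IsAveragingStep n M k D)
    (h : ∀ y ∈ boxIdx d₀ n, D' y = D y) : IsAveragingStep n M k D' := by
  obtain ⟨g, a, hg, ha, hDg⟩ := hD
  exact ⟨g, a, hg, ha, fun y hy => (h y hy).trans (hDg y hy)⟩

lemma isAveragingStep_of_eq_zero (hM : 0 ≤ M) (hD : ∀ y ∈ boxIdx d₀ n, D y = 0) :
    IsAveragingStep n M k D :=
  ⟨0, 0, fun _ _ => by simpa using hM, by simp, fun y hy => by simp [hD y hy]⟩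

lemma isAveragingStep_iterAvg_succ_sub (hb : ∀ y ∈ boxIdx d₀ n, |h y| ≤ M) {a : ℝ}
    (ha : |a| * ((n : ℝ) - 1) ≤ 1) (s : ℕ) (hk : s < d₀ → (k : ℕ) = s) :
    IsAveragingStep n M k fun y => a * (iterAvg n h (s + 1) y - iterAvg n h s y) := by
  by_cases hs : s < d₀
  · obtain rfl : k = ⟨s, hs⟩ := Fin.ext (hk hs)
    exact ⟨iterAvg n h s, a, abs_iterAvg_le hb s, ha, fun y _ => by rw [iterAvg, dif_pos hs]⟩
  · refine ⟨iterAvg n h s, 0, abs_iterAvg_le hb s, by simp, fun y _ => ?_⟩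
    rw [iterAvg, dif_neg hs]
    ring

lemma IsAveragingStep.sum_line_eq_zero (hn : n ≠ 0) (hD : IsAveragingStep n M k D)
    {y : Fin d₀ → ℤ} (hy : y ∈ boxIdx d₀ n) :
    ∑ l ∈ Finset.Icc (1 : ℤ) n, D (Function.update y k l) = 0 := by
  obtain ⟨g, a, -, -, hDg⟩ := hD
  rw [Finset.sum_congr rfl fun l hl => hDg _ (update_mem_boxIdx hy k (Finset.mem_Icc.1 hl).1
    (Finset.mem_Icc.1 hl).2), ← Finset.mul_sum, Finset.sum_sub_distrib,
    sum_lineAvg_update hn, sub_self, mul_zero]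

noncomputable def partialLineSum (D : (Fin d₀ → ℤ) → ℝ) (k : Fin d₀) (y : Fin d₀ → ℤ) : ℝ :=
  ∑ l ∈ Finset.Icc 1 (y k), D (Function.update y k l)

lemma partialLineSum_sub_partialLineSum_update (D : (Fin d₀ → ℤ) → ℝ) {y : Fin d₀ → ℤ}
    (hy : 1 ≤ y k) :
    partialLineSum D k y - partialLineSum D k (Function.update y k (y k - 1)) = D y := by
  have hIcc : Finset.Icc 1 (y k) = insert (y k) (Finset.Icc 1 (y k - 1)) := by
    ext x; simp only [Finset.mem_insert, Finset.mem_Icc]; omega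
  rw [partialLineSum, partialLineSum, hIcc, Finset.sum_insert (by simp),
    Function.update_self]
  simp [Function.update_idem]

lemma partialLineSum_of_nonpos (D : (Fin d₀ → ℤ) → ℝ) {y : Fin d₀ → ℤ} (hy : y k ≤ 0) :
    partialLineSum D k y = 0 := by
  rw [partialLineSum, Finset.Icc_eq_empty (by omega), Finset.sum_empty]

lemma abs_partialLineSum_lineAvg_sub_le {g : (Fin d₀ → ℤ) → ℝ}
    (hg : ∀ y ∈ boxIdx d₀ n, |g y| ≤ M) {y : Fin d₀ → ℤ} (hy : y ∈ boxIdx d₀ n) :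
    |partialLineSum (fun x => lineAvg n k g x - g x) k y| ≤ ((n : ℝ) - 1) * M := by
  obtain ⟨hy₁, hyn⟩ := mem_boxIdx.1 hy k
  have hsub : Finset.Icc 1 (y k) ⊆ Finset.Icc (1 : ℤ) n := Finset.Icc_subset_Icc le_rfl hyn
  have hcard : ((Finset.Icc 1 (y k)).card : ℝ) = y k := by
    rw [Int.card_Icc, add_sub_cancel_right, ← Int.cast_natCast, Int.toNat_of_nonneg (by omega)]
  have hM : 0 ≤ M := (abs_nonneg _).trans (hg y hy)
  have hn : (0 : ℝ) < n := by exact_mod_cast (show (0 : ℤ) < n by omega)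
  have hline := abs_card_mul_sum_div_sub_sum_le hsub (g := fun l => g (Function.update y k l))
    fun l hl => hg _ (update_mem_boxIdx hy k (Finset.mem_Icc.1 hl).1 (Finset.mem_Icc.1 hl).2)
  rw [hcard, card_Icc_one_natCast] at hline
  have hsum : partialLineSum (fun x => lineAvg n k g x - g x) k y =
      (y k : ℝ) * (∑ l ∈ Finset.Icc (1 : ℤ) n, g (Function.update y k l)) / n -
        ∑ l ∈ Finset.Icc 1 (y k), g (Function.update y k l) := by
    simp only [partialLineSum, Finset.sum_sub_distrib, lineAvg_update]
    rw [Finset.sum_const, nsmul_eq_mul, hcard, lineAvg, mul_div_assoc]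
  rw [hsum]
  refine hline.trans ?_
  rw [div_le_iff₀ hn]
  -- `n (n - 1) - 2 i (n - i) = (n - i)(n - i - 1) + i (i - 1) ≥ 0` for integers `i`, `n`
  have hconsec : ∀ j : ℤ, 0 ≤ j * (j - 1) := fun j => by
    rcases le_or_gt 1 j with hj | hj <;> nlinarith
  have hquad : 2 * y k * (n - y k) ≤ (n : ℤ) * (n - 1) := by
    nlinarith [hconsec (n - y k), hconsec (y k)]
  have hquad' : 2 * (y k : ℝ) * (n - y k) ≤ n * (n - 1) := by exact_mod_cast hquad
  nlinarith [mul_le_mul_of_nonneg_right hquad' hM]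

lemma IsAveragingStep.abs_partialLineSum_le (hD : IsAveragingStep n M k D) {y : Fin d₀ → ℤ}
    (hy : y ∈ boxIdx d₀ n) : |partialLineSum D k y| ≤ M := by
  obtain ⟨g, a, hg, ha, hDg⟩ := hD
  have hM : 0 ≤ M := (abs_nonneg _).trans (hg y hy)
  have hPD : partialLineSum D k y = a * partialLineSum (fun x => lineAvg n k g x - g x) k y := by
    rw [partialLineSum, partialLineSum, Finset.mul_sum]
    refine Finset.sum_congr rfl fun l hl => hDg _ ?_
    rw [Finset.mem_Icc] at hl
    exact update_mem_boxIdx hy k hl.1 (hl.2.trans (mem_boxIdx.1 hy k).2)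
  calc |partialLineSum D k y|
      = |a| * |partialLineSum (fun x => lineAvg n k g x - g x) k y| := by rw [hPD, abs_mul]
    _ ≤ |a| * (((n : ℝ) - 1) * M) := by gcongr; exact abs_partialLineSum_lineAvg_sub_le hg hy
    _ = (|a| * ((n : ℝ) - 1)) * M := by ring
    _ ≤ M := mul_le_of_le_one_left hM ha

lemma IsAveragingStep.ite_partialLineSum_sub (hn : n ≠ 0) (hD : IsAveragingStep n M k D)
    (y : Fin d₀ → ℤ) :
    ((if y ∈ boxIdx d₀ n then partialLineSum D k y else 0) -
      if Function.update y k (y k - 1) ∈ boxIdx d₀ n then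
        partialLineSum D k (Function.update y k (y k - 1)) else 0) =
    if y ∈ boxIdx d₀ n then D y else 0 := by
  by_cases hy : y ∈ boxIdx d₀ n
  · obtain ⟨hy₁, hyn⟩ := mem_boxIdx.1 hy k
    have hy' : (if Function.update y k (y k - 1) ∈ boxIdx d₀ n then
        partialLineSum D k (Function.update y k (y k - 1)) else 0) =
        partialLineSum D k (Function.update y k (y k - 1)) := by
      refine (ite_eq_left_iff.2 fun hy' => (partialLineSum_of_nonpos D ?_).symm)
      by_contra hpos
      exact hy' (update_mem_boxIdx hy k (by simp at hpos; omega) (by omega))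
    rw [if_pos hy, if_pos hy, hy', partialLineSum_sub_partialLineSum_update D hy₁]
  · rw [if_neg hy, if_neg hy]
    split_ifs with hy'
    · -- `y - e_k` lies in the box and `y` does not, so `y k - 1 = n`
      obtain ⟨⟨hy₁, hyn⟩, hother⟩ := update_mem_boxIdx_iff.1 hy'
      have hyk : y k - 1 = n := by
        by_contra hne
        refine hy (mem_boxIdx.2 fun j => ?_)
        rcases eq_or_ne j k with rfl | hj
        · omega
        · exact hother j hj
      rw [partialLineSum, Function.update_self, hyk]
      simpa [Function.update_idem] using hD.sum_line_eq_zero hn hy'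
    · ring

/-- Column `t` carries the profile `G t` along `e₀`; the flux `G (t - 1) - G t` left over at
column `t` is routed inside it along the lines in direction `dir t`. -/
noncomputable def columnStream (n m : ℕ) (G : ℤ → (Fin d₀ → ℤ) → ℝ) (dir : ℤ → Fin d₀) :
    Streamm (d₀ + 1) := fun e =>
  if 0 ≤ e.1 0 ∧ e.1 0 < m ∧ Fin.tail e.1 ∈ boxIdx d₀ n then
    Fin.cases (G (e.1 0) (Fin.tail e.1))
      (fun k => if k = dir (e.1 0) then
        partialLineSum (fun y => G (e.1 0 - 1) y - G (e.1 0) y) k (Fin.tail e.1) else 0) e.2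
  else 0

section ColumnStream

variable {m : ℕ} {G : ℤ → (Fin d₀ → ℤ) → ℝ} {dir : ℤ → Fin d₀}

lemma columnStream_zero (z : Fin (d₀ + 1) → ℤ) :
    columnStream n m G dir (z, 0) =
      if 0 ≤ z 0 ∧ z 0 < m ∧ Fin.tail z ∈ boxIdx d₀ n then G (z 0) (Fin.tail z) else 0 := by
  rw [columnStream]
  split_ifs <;> rfl

lemma columnStream_succ (z : Fin (d₀ + 1) → ℤ) (k : Fin d₀) :
    columnStream n m G dir (z, k.succ) =
      if k = dir (z 0) ∧ 0 ≤ z 0 ∧ z 0 < m then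
        if Fin.tail z ∈ boxIdx d₀ n then
          partialLineSum (fun y => G (z 0 - 1) y - G (z 0) y) k (Fin.tail z) else 0
      else 0 := by
  rw [columnStream]
  by_cases hk : k = dir (z 0) <;> by_cases ht : 0 ≤ z 0 ∧ z 0 < m <;>
    by_cases hy : Fin.tail z ∈ boxIdx d₀ n <;> simp [hk, ht, hy]

lemma unshift_zero_apply_zero (z : Fin (d₀ + 1) → ℤ) : unshift z 0 0 = z 0 - 1 := by
  simp [unshift]

lemma tail_unshift_zero (z : Fin (d₀ + 1) → ℤ) : Fin.tail (unshift z 0) = Fin.tail z := by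
  funext j; simp [unshift, Fin.tail, Fin.succ_ne_zero]

lemma unshift_succ_apply_zero (z : Fin (d₀ + 1) → ℤ) (k : Fin d₀) :
    unshift z k.succ 0 = z 0 := by
  simp [unshift, (Fin.succ_ne_zero k).symm]

lemma tail_unshift_succ (z : Fin (d₀ + 1) → ℤ) (k : Fin d₀) :
    Fin.tail (unshift z k.succ) = Function.update (Fin.tail z) k (Fin.tail z k - 1) := by
  funext j
  rcases eq_or_ne j k with rfl | hj
  · simp [unshift, Fin.tail]
  · simp [unshift, Fin.tail, hj, Fin.succ_inj]

lemma columnStream_succ_sub_unshift (hn : n ≠ 0)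
    (hstep : ∀ t : ℤ, 0 ≤ t → t < m → IsAveragingStep n M (dir t) fun y => G (t - 1) y - G t y)
    (z : Fin (d₀ + 1) → ℤ) (k : Fin d₀) :
    columnStream n m G dir (z, k.succ) - columnStream n m G dir (unshift z k.succ, k.succ) =
      if k = dir (z 0) then
        if 0 ≤ z 0 ∧ z 0 < m ∧ Fin.tail z ∈ boxIdx d₀ n then
          G (z 0 - 1) (Fin.tail z) - G (z 0) (Fin.tail z) else 0
      else 0 := by
  rw [columnStream_succ, columnStream_succ, unshift_succ_apply_zero, tail_unshift_succ]
  by_cases hk : k = dir (z 0) ∧ 0 ≤ z 0 ∧ z 0 < m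
  · obtain ⟨rfl, ht₀, htm⟩ := hk
    simpa [ht₀, htm] using (hstep _ ht₀ htm).ite_partialLineSum_sub hn (Fin.tail z)
  · rw [if_neg hk, if_neg hk, sub_zero]
    split_ifs <;> simp_all

theorem nodeLaw_columnStream (hn : n ≠ 0)
    (hstep : ∀ t : ℤ, 0 ≤ t → t < m → IsAveragingStep n M (dir t) fun y => G (t - 1) y - G t y)
    {z : Fin (d₀ + 1) → ℤ} (hz₀ : ¬(z 0 = 0 ∧ Fin.tail z ∈ boxIdx d₀ n))
    (hzm : ¬(z 0 = m ∧ Fin.tail z ∈ boxIdx d₀ n)) :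
    nodeLaw (columnStream n m G dir) z := by
  rw [nodeLaw, Fin.sum_univ_succ, columnStream_zero, columnStream_zero, unshift_zero_apply_zero,
    tail_unshift_zero]
  simp only [columnStream_succ_sub_unshift hn hstep, Finset.sum_ite_eq', Finset.mem_univ, if_true]
  by_cases hy : Fin.tail z ∈ boxIdx d₀ n
  · have h₀ : z 0 ≠ 0 := fun h => hz₀ ⟨h, hy⟩
    have hm : z 0 ≠ m := fun h => hzm ⟨h, hy⟩
    simp only [hy, and_true]
    split_ifs <;> first | (exfalso; omega) | ring
  · simp [hy]

lemma abs_columnStream_le (hM : 0 ≤ M)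
    (hstep : ∀ t : ℤ, 0 ≤ t → t < m → IsAveragingStep n M (dir t) fun y => G (t - 1) y - G t y)
    (hG : ∀ t : ℤ, 0 ≤ t → t < m → ∀ y ∈ boxIdx d₀ n, |G t y| ≤ M) (e : Edge (d₀ + 1)) :
    |columnStream n m G dir e| ≤ M := by
  obtain ⟨z, i⟩ := e
  cases i using Fin.cases with
  | zero =>
    rw [columnStream_zero]
    split_ifs with h
    exacts [hG _ h.1 h.2.1 _ h.2.2, by simpa using hM]
  | succ k =>
    rw [columnStream_succ]
    split_ifs with hk hy
    · obtain ⟨rfl, ht₀, htm⟩ := hk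
      exact (hstep _ ht₀ htm).abs_partialLineSum_le hy
    all_goals simpa using hM

theorem mixProp_columnStream (hn : 1 ≤ n) (hM : 0 ≤ M) (hm : 1 ≤ m)
    {fin fout : (Fin d₀ → ℤ) → ℝ}
    (hstep : ∀ t : ℤ, 0 ≤ t → t < m → IsAveragingStep n M (dir t) fun y => G (t - 1) y - G t y)
    (hG : ∀ t : ℤ, 0 ≤ t → t < m → ∀ y ∈ boxIdx d₀ n, |G t y| ≤ M)
    (hfin : ∀ y ∈ boxIdx d₀ n, G 0 y = fin y)
    (hfout : ∀ y ∈ boxIdx d₀ n, G (m - 1) y = fout y) :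
    mixProp d₀ M n m fin fout (columnStream n m G dir) := by
  refine ⟨fun e he => ?_, abs_columnStream_le hM hstep hG, fun y hy => ?_, fun z hz₀ hzm => ?_⟩
  · rw [columnStream, if_neg]
    simpa [mem_boxIdx, Fin.tail] using he
  · have hy' := mem_boxIdx.2 hy
    simp [columnStream_zero, hy', hfin, hfout, hm, show m ≠ 0 by omega]
  · exact nodeLaw_columnStream (by omega) hstep (by simpa [mem_boxIdx, Fin.tail] using hz₀)
      (by simpa [mem_boxIdx, Fin.tail] using hzm)

end ColumnStream

section Mixing

variable {fin fout : (Fin d₀ → ℤ) → ℝ} {m : ℕ} {c : ℤ}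

noncomputable def mixProfile (n m : ℕ) (fin fout : (Fin d₀ → ℤ) → ℝ) (c t : ℤ) :
    (Fin d₀ → ℤ) → ℝ :=
  if t < c then avgProfile n fin t.toNat else avgProfile n fout ((m : ℤ) - 1 - t).toNat

lemma abs_mixProfile_le (hfin : ∀ y ∈ boxIdx d₀ n, |fin y| ≤ M)
    (hfout : ∀ y ∈ boxIdx d₀ n, |fout y| ≤ M) (t : ℤ) {y : Fin d₀ → ℤ} (hy : y ∈ boxIdx d₀ n) :
    |mixProfile n m fin fout c t y| ≤ M := by
  rw [mixProfile]
  split_ifs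
  exacts [abs_avgProfile_le hfin _ hy, abs_avgProfile_le hfout _ hy]

variable [NeZero d₀]

/-- Stages `≥ d₀` leave the profile unchanged, so reducing the stage modulo `d₀` is harmless. -/
def mixDir (n m : ℕ) (c t : ℤ) : Fin d₀ :=
  Fin.ofNat d₀ ((if t < c then (t - 1).toNat else ((m : ℤ) - 1 - t).toNat) / (n - 1))

lemma isAveragingStep_avgProfile_succ_sub (hn : 1 ≤ n) (hb : ∀ y ∈ boxIdx d₀ n, |h y| ≤ M) {ε : ℝ}
    (hε : |ε| ≤ 1) (s : ℕ) :
    IsAveragingStep n M (Fin.ofNat d₀ (s / (n - 1)))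
      fun y => ε * (avgProfile n h (s + 1) y - avgProfile n h s y) := by
  have hslope : |ε * (1 / ((n - 1 : ℕ) : ℝ))| * ((n : ℝ) - 1) ≤ 1 := by
    have hn' : (0 : ℝ) ≤ n - 1 := by simpa using hn
    rw [Nat.cast_sub hn, Nat.cast_one, abs_mul, abs_of_nonneg (one_div_nonneg.2 hn'), mul_assoc]
    rcases eq_or_ne ((n : ℝ) - 1) 0 with h₀ | h₀
    · simp [h₀]
    · rw [one_div_mul_cancel h₀, mul_one]
      exact hε
  refine (isAveragingStep_iterAvg_succ_sub hb hslope (s / (n - 1)) fun hs => ?_).congr fun y _ => ?_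
  · rw [Fin.val_ofNat, Nat.mod_eq_of_lt hs]
  · rw [avgProfile_succ_sub]
    ring

lemma isAveragingStep_mixProfile (hn : 1 ≤ n) (hM : 0 ≤ M) (hfin : ∀ y ∈ boxIdx d₀ n, |fin y| ≤ M)
    (hfout : ∀ y ∈ boxIdx d₀ n, |fout y| ≤ M)
    (hsum : ∑ y ∈ boxIdx d₀ n, fin y = ∑ y ∈ boxIdx d₀ n, fout y)
    (hc₁ : ((d₀ * (n - 1) : ℕ) : ℤ) < c)
    (hc₂ : c < m → ((d₀ * (n - 1) : ℕ) : ℤ) ≤ (m : ℤ) - 1 - c) {t : ℤ} (ht₀ : 0 ≤ t)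
    (htm : t < m) :
    IsAveragingStep n M (mixDir n m c t)
      fun y => mixProfile n m fin fout c (t - 1) y - mixProfile n m fin fout c t y := by
  rcases lt_trichotomy t c with htc | rfl | htc
  · rcases ht₀.eq_or_lt with rfl | ht₁
    · exact isAveragingStep_of_eq_zero hM fun y _ => by
        simp [mixProfile, htc, show (-1 : ℤ) < c by omega]
    obtain ⟨s, rfl⟩ : ∃ s : ℕ, t = s + 1 := ⟨(t - 1).toNat, by omega⟩
    have hdir : mixDir n m c (s + 1) = Fin.ofNat d₀ (s / (n - 1)) := by simp [mixDir, htc]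
    rw [hdir]
    refine (isAveragingStep_avgProfile_succ_sub hn hfin (ε := -1) (by simp) s).congr fun y _ => ?_
    simp only [mixProfile, if_pos htc, if_pos (by omega : (s : ℤ) + 1 - 1 < c)]
    rw [show ((s : ℤ) + 1 - 1).toNat = s by omega, show ((s : ℤ) + 1).toNat = s + 1 by omega]
    ring
  · refine isAveragingStep_of_eq_zero hM fun y hy => ?_
    rw [mixProfile, mixProfile, if_pos (by omega), if_neg (lt_irrefl _),
      avgProfile_of_le hn (by omega) hy, avgProfile_of_le hn (by omega) hy,
      iterAvg_dim_eq_sum_div (by omega), iterAvg_dim_eq_sum_div (by omega), hsum, sub_self]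
  · set s := ((m : ℤ) - 1 - t).toNat
    have hdir : mixDir n m c t = Fin.ofNat d₀ (s / (n - 1)) := by
      simp [mixDir, not_lt.2 htc.le, s]
    rw [hdir]
    refine (isAveragingStep_avgProfile_succ_sub hn hfout (ε := 1) (by simp) s).congr fun y _ => ?_
    simp only [mixProfile, if_neg (not_lt.2 htc.le), if_neg (by omega : ¬t - 1 < c)]
    rw [show ((m : ℤ) - 1 - (t - 1)).toNat = s + 1 by omega]
    ring

theorem mixProp_mixProfile (hn : 1 ≤ n) (hM : 0 ≤ M) (hfin : ∀ y ∈ boxIdx d₀ n, |fin y| ≤ M)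
    (hfout : ∀ y ∈ boxIdx d₀ n, |fout y| ≤ M)
    (hsum : ∑ y ∈ boxIdx d₀ n, fin y = ∑ y ∈ boxIdx d₀ n, fout y) (hm : 1 ≤ m)
    (hc₁ : ((d₀ * (n - 1) : ℕ) : ℤ) < c)
    (hc₂ : c < m → ((d₀ * (n - 1) : ℕ) : ℤ) ≤ (m : ℤ) - 1 - c)
    (hlast : ∀ y ∈ boxIdx d₀ n, mixProfile n m fin fout c ((m : ℤ) - 1) y = fout y) :
    mixProp d₀ M n m fin fout
      (columnStream n m (mixProfile n m fin fout c) (mixDir n m c)) :=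
  mixProp_columnStream hn hM hm
    (fun _ ht₀ htm => isAveragingStep_mixProfile hn hM hfin hfout hsum hc₁ hc₂ ht₀ htm)
    (fun t _ _ _ hy => abs_mixProfile_le hfin hfout t hy)
    (fun y _ => by simp [mixProfile, (by omega : (0 : ℤ) < c), avgProfile_zero]) hlast

end Mixing

/-- Lemma 4.1, mixing.  `d = d₀ + 1 ≥ 2`.  For inputs and outputs
bounded by `M` with equal total sums, a mixing stream exists in `[0,m) × [1,n]^{d-1}` for
every `m ≥ 2(d-1)n`; if moreover the outputs are uniform, such a stream exists for every
`m ≥ (d-1)n`. -/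
theorem statement16 (d₀ : ℕ) (hd : 1 ≤ d₀) (M : ℝ) (hM : 0 < M) (n : ℕ) (hn : 1 ≤ n)
    (fin fout : (Fin d₀ → ℤ) → ℝ)
    (hfin : ∀ y : Fin d₀ → ℤ, (∀ k, 1 ≤ y k ∧ y k ≤ (n : ℤ)) → |fin y| ≤ M)
    (hfout : ∀ y : Fin d₀ → ℤ, (∀ k, 1 ≤ y k ∧ y k ≤ (n : ℤ)) → |fout y| ≤ M)
    (hsum : ∑ y ∈ boxIdx d₀ n, fin y = ∑ y ∈ boxIdx d₀ n, fout y)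
    (m : ℕ) :
    (2 * d₀ * n ≤ m → ∃ F : Streamm (d₀ + 1), mixProp d₀ M n m fin fout F) ∧
    ((d₀ * n ≤ m ∧ ∀ y : Fin d₀ → ℤ, (∀ k, 1 ≤ y k ∧ y k ≤ (n : ℤ)) →
        fout y = (1 / (n : ℝ) ^ d₀) * ∑ z ∈ boxIdx d₀ n, fin z) →
      ∃ F : Streamm (d₀ + 1), mixProp d₀ M n m fin fout F) := by
  have : NeZero d₀ := ⟨by omega⟩
  have hfin' : ∀ y ∈ boxIdx d₀ n, |fin y| ≤ M := fun y hy => hfin y (mem_boxIdx.1 hy)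
  have hfout' : ∀ y ∈ boxIdx d₀ n, |fout y| ≤ M := fun y hy => hfout y (mem_boxIdx.1 hy)
  have hdn : d₀ * (n - 1) + d₀ = d₀ * n := by
    rw [← Nat.mul_succ, Nat.succ_eq_add_one, Nat.sub_add_cancel hn]
  constructor
  · intro hm
    have h2dn : 2 * d₀ * n = 2 * (d₀ * n) := by ring
    refine ⟨_, mixProp_mixProfile (c := m - 1 - (d₀ * (n - 1) : ℕ)) hn hM.le hfin' hfout' hsum
      (by omega) (by omega) (by omega) fun y _ => ?_⟩
    rw [mixProfile, if_neg (by omega)]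
    simp [avgProfile_zero]
  · rintro ⟨hm, huni⟩
    refine ⟨_, mixProp_mixProfile (c := m) hn hM.le hfin' hfout' hsum (by omega) (by omega)
      (by omega) fun y hy => ?_⟩
    rw [mixProfile, if_pos (by omega), avgProfile_of_le hn (by omega) hy,
      iterAvg_dim_eq_sum_div (by omega), huni y (mem_boxIdx.1 hy)]
    ring

end FPP
end
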